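/- arXiv:math/0509166 — 2 statements merged into one kernel-verified Lean document; each statement's English description precedes it below -/
import Mathlib

section
/- Under the stated moment inequality E[V^{m-1+γ}] ≤ A·E[V^{m-1}] + B·E[V^{m-2+2δ}] valid for all m ≥ 1, with γ > 0 and ε := min(1+γ-2δ, γ) > 0, iteration yields that E[V^κ] < ∞ for every κ > 0, i.e., a random variable V ≥ 1 whose moments satisfy this recursive bound has all finite positive moments. -/
open MeasureTheory

/-- **Iteration of the moment recursion.**
If `V ≥ 1` is a random variable whose moments satisfy
`E[V^{m-1+γ}] ≤ A·E[V^{m-1}] + B·E[V^{m-2+2δ}]` for all `m ≥ 1`, with `γ > 0` and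
`ε := min(1+γ-2δ, γ) > 0`, and the base-case moments (`m = 1`) are finite, then
iteration yields `E[V^κ] < ∞` for every `κ > 0`. -/
theorem all_moments_finite_of_recursion
    {Ω : Type*} [MeasurableSpace Ω] (P : Measure Ω) [IsProbabilityMeasure P]
    (V : Ω → ℝ) (hVmeas : Measurable V) (hV1 : ∀ ω, 1 ≤ V ω)
    (A B γ δ : ℝ) (hA : 0 ≤ A) (hB : 0 ≤ B) (hγ : 0 < γ)
    (hδ : 0 ≤ δ) (hδ' : δ < (1 + γ) / 2)
    (hε : 0 < min (1 + γ - 2 * δ) γ)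
    (hrec : ∀ m : ℝ, 1 ≤ m →
      (∫⁻ ω, ENNReal.ofReal (V ω ^ (m - 1 + γ)) ∂P) ≤
        ENNReal.ofReal A * (∫⁻ ω, ENNReal.ofReal (V ω ^ (m - 1)) ∂P) +
        ENNReal.ofReal B * (∫⁻ ω, ENNReal.ofReal (V ω ^ (m - 2 + 2 * δ)) ∂P))
    -- base case `m = 1`: both moments on the right-hand side are finite
    (hbase : (∫⁻ ω, ENNReal.ofReal (V ω ^ (2 * δ - 1)) ∂P) < ⊤) :
    ∀ κ : ℝ, 0 < κ → (∫⁻ ω, ENNReal.ofReal (V ω ^ κ) ∂P) < ⊤ := by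
  set ε : ℝ := min (1 + γ - 2 * δ) γ with hεdef
  set I : ℝ → ENNReal := fun t => ∫⁻ ω, ENNReal.ofReal (V ω ^ t) ∂P with hIdef
  have mono : ∀ a b : ℝ, a ≤ b → I a ≤ I b := by
    intro a b hab
    refine lintegral_mono fun ω => ENNReal.ofReal_le_ofReal ?_
    exact Real.rpow_le_rpow_of_exponent_le (hV1 ω) hab
  set c₀ : ℝ := max (2 * δ - 1) 0 with hc₀def
  have hI0 : I 0 < ⊤ := by
    simp only [hIdef, Real.rpow_zero, ENNReal.ofReal_one, lintegral_one, measure_univ,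
      mul_one]
    exact ENNReal.one_lt_top
  have hIc₀ : I c₀ < ⊤ := by
    rcases max_cases (2 * δ - 1) 0 with ⟨h1, _⟩ | ⟨h1, _⟩
    · rw [hc₀def, h1]; exact hbase
    · rw [hc₀def, h1]; exact hI0
  have key : ∀ n : ℕ, I (c₀ + n * ε) < ⊤ := by
    intro n
    induction n with
    | zero => simpa using hIc₀
    | succ n ih =>
      set c : ℝ := c₀ + n * ε with hcdef
      have hc0 : 0 ≤ c := by
        have : (0:ℝ) ≤ n * ε := by positivity
        have : (0:ℝ) ≤ c₀ := le_max_right _ _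
        rw [hcdef]; positivity
      have hcδ : 2 * δ - 1 ≤ c := by
        have h1 : 2 * δ - 1 ≤ c₀ := le_max_left _ _
        have h2 : (0:ℝ) ≤ n * ε := by positivity
        rw [hcdef]; linarith
      set m : ℝ := min (c + 1) (c + 2 - 2 * δ) with hmdef
      have hm1 : 1 ≤ m := by
        rw [hmdef]
        refine le_min (by linarith) (by linarith)
      have hma : m - 1 ≤ c := by
        have := min_le_left (c + 1) (c + 2 - 2 * δ); rw [hmdef]; linarith
      have hmb : m - 2 + 2 * δ ≤ c := by
        have := min_le_right (c + 1) (c + 2 - 2 * δ); rw [hmdef]; linarith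
      have hmε : m - 1 + γ = c + ε := by
        rcases le_total (1 + γ - 2 * δ) γ with h | h
        · have : ε = 1 + γ - 2 * δ := min_eq_left h
          have hm : m = c + 2 - 2 * δ := min_eq_right (by linarith)
          rw [hm, this]; ring
        · have : ε = γ := min_eq_right h
          have hm : m = c + 1 := min_eq_left (by linarith)
          rw [hm, this]; ring
      have step : I (c + ε) < ⊤ := by
        have h1 := hrec m hm1
        have h2 : I (m - 1 + γ) ≤ ENNReal.ofReal A * I c + ENNReal.ofReal B * I c := by
          refine le_trans h1 (add_le_add ?_ ?_)
          · exact mul_le_mul_right (mono _ _ hma) _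
          · exact mul_le_mul_right (mono _ _ hmb) _
        rw [hmε] at h2
        refine lt_of_le_of_lt h2 (ENNReal.add_lt_top.mpr ⟨?_, ?_⟩)
        · exact ENNReal.mul_lt_top ENNReal.ofReal_lt_top ih
        · exact ENNReal.mul_lt_top ENNReal.ofReal_lt_top ih
      have : c₀ + (n + 1 : ℕ) * ε = c + ε := by
        push_cast; rw [hcdef]; ring
      rw [this]; exact step
  intro κ hκ
  obtain ⟨n, hn⟩ := exists_nat_ge (κ / ε)
  have hκn : κ ≤ c₀ + n * ε := by
    have h1 : κ ≤ n * ε := by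
      rw [div_le_iff₀ hε] at hn; linarith
    have h2 : (0:ℝ) ≤ c₀ := le_max_right _ _
    linarith
  exact lt_of_le_of_lt (mono _ _ hκn) (key n)
end

section
/- Let x, x̃ be continuous pasts on (-∞,0] bounded by |x(s)|, |x̃(s)| ≤ n(1+|s|^{3/4}), let y be a continuous future on [0,∞) with x(0)=x̃(0)=y(0), and set Ψ(z) = ∫_{-∞}^0 e^{-s²+s} z(s)² ds. Then for all t > 0: |Ψ(π_t(x{:}y)) - Ψ(π_t(x̃{:}y))| ≤ e^{-t} ∫_{-∞}^0 e^{-|s|}·4n²(1+|s|^{3/4})² ds = C(n)e^{-t}, i.e., the influence of the differing pasts decays exponentially in t. -/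
open MeasureTheory

/-- The functional `Ψ(x) = ∫_{-∞}^0 e^{-s²+s} x(s)² ds`. -/
noncomputable def Psi (x : ℝ → ℝ) : ℝ :=
  ∫ s in Set.Iic (0:ℝ), Real.exp (-s ^ 2 + s) * (x s) ^ 2

/-- Concatenation `x{:}y` of a past `x` and a future `y`. -/
noncomputable def concat (x y : ℝ → ℝ) : ℝ → ℝ := fun t => if t < 0 then x t else y t

lemma aux_rpow_le (r : ℝ) (hr : 0 ≤ r) : r ^ ((3:ℝ)/4) ≤ 1 + r := by
  rcases le_total r 1 with h | h
  · have := Real.rpow_le_one hr h (by norm_num : (0:ℝ) ≤ 3/4)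
    linarith
  · have h1 : r ^ ((3:ℝ)/4) ≤ r ^ (1:ℝ) :=
      Real.rpow_le_rpow_of_exponent_le h (by norm_num)
    rw [Real.rpow_one] at h1
    linarith

lemma aux_poly (r : ℝ) (hr : 0 ≤ r) : (1 + r ^ ((3:ℝ)/4))^2 ≤ 64 * Real.exp (r/2) := by
  have h1 := aux_rpow_le r hr
  have h4 : 0 ≤ r ^ ((3:ℝ)/4) := Real.rpow_nonneg hr _
  have h2 : 1 + r/4 ≤ Real.exp (r/4) := by
    have := Real.add_one_le_exp (r/4); linarith
  have h3 : Real.exp (r/4) * Real.exp (r/4) = Real.exp (r/2) := by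
    rw [← Real.exp_add]; ring_nf
  have hA : (1 + r ^ ((3:ℝ)/4))^2 ≤ (2 + r)^2 := by nlinarith
  have hB : (2 + r)^2 ≤ 64 * (1 + r/4)^2 := by nlinarith
  have hC : (1 + r/4)^2 ≤ Real.exp (r/2) := by nlinarith [Real.exp_pos (r/4)]
  nlinarith

lemma integrableOn_exp_half : IntegrableOn (fun s : ℝ => Real.exp (s/2)) (Set.Iic (0:ℝ)) := by
  have h1 : IntegrableOn Real.exp (Set.Iic (0:ℝ)) := integrableOn_exp_Iic 0
  have h2 : Integrable ((Set.Iic (0:ℝ)).indicator Real.exp) :=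
    (integrable_indicator_iff measurableSet_Iic).2 h1
  have h3 := h2.comp_mul_right' (R := (2:ℝ)⁻¹) (by norm_num)
  have h4 : (fun s : ℝ => (Set.Iic (0:ℝ)).indicator Real.exp (s * 2⁻¹)) =
      (Set.Iic (0:ℝ)).indicator (fun s => Real.exp (s/2)) := by
    funext s
    by_cases hs : s ≤ (0:ℝ)
    · have hs2 : s * 2⁻¹ ∈ Set.Iic (0:ℝ) := by
        simp only [Set.mem_Iic]; linarith
      rw [Set.indicator_of_mem hs2, Set.indicator_of_mem (Set.mem_Iic.2 hs)]
      ring_nf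
    · have hs2 : s * 2⁻¹ ∉ Set.Iic (0:ℝ) := by
        simp only [Set.mem_Iic, not_le] at hs ⊢; linarith
      rw [Set.indicator_of_notMem hs2,
        Set.indicator_of_notMem (fun h => hs (Set.mem_Iic.1 h))]
  rw [h4] at h3
  exact (integrable_indicator_iff measurableSet_Iic).1 h3

lemma integrableOn_of_exp_bound {h : ℝ → ℝ} (hc : Continuous h) {C : ℝ}
    (hb : ∀ s ≤ (0:ℝ), |h s| ≤ C * Real.exp (s/2)) :
    IntegrableOn h (Set.Iic (0:ℝ)) := by
  refine Integrable.mono (integrableOn_exp_half.const_mul C)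
    hc.aestronglyMeasurable.restrict ?_
  filter_upwards [ae_restrict_mem measurableSet_Iic] with s hs
  rw [Real.norm_eq_abs, Real.norm_eq_abs]
  exact (hb s hs).trans (le_abs_self _)

lemma concat_continuous {z y : ℝ → ℝ} (hz : Continuous z) (hy : Continuous y)
    (h : z 0 = y 0) : Continuous (concat z y) := by
  have heq : concat z y = fun t => if t ≤ 0 then z t else y t := by
    funext u
    unfold concat
    rcases lt_trichotomy u 0 with h1 | h1 | h1
    · rw [if_pos h1, if_pos h1.le]
    · subst h1; rw [if_neg (lt_irrefl 0), if_pos le_rfl, h]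
    · rw [if_neg (not_lt.2 h1.le), if_neg (not_le.2 h1)]
  rw [heq]
  exact Continuous.if_le hz hy continuous_id continuous_const
    (fun a ha => by rw [show a = 0 from ha, h])

set_option maxHeartbeats 1000000 in
/-- **Exponential decay of the influence of the past.**
Let `x, x̃` be continuous pasts with `|x(s)|, |x̃(s)| ≤ n(1+|s|^{3/4})`, and `y` a
future with `x(0) = x̃(0) = y(0)`.  Then for all `t > 0`,
`|Ψ(π_t(x{:}y)) - Ψ(π_t(x̃{:}y))| ≤ e^{-t} ∫_{-∞}^0 e^{-|s|}·4n²(1+|s|^{3/4})² ds`. -/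
theorem psi_memory_decay (n : ℝ) (hn : 0 < n) (x x' y : ℝ → ℝ)
    (hxc : Continuous x) (hx'c : Continuous x') (hyc : Continuous y)
    (hxb : ∀ s : ℝ, s ≤ 0 → |x s| ≤ n * (1 + |s| ^ ((3:ℝ)/4)))
    (hx'b : ∀ s : ℝ, s ≤ 0 → |x' s| ≤ n * (1 + |s| ^ ((3:ℝ)/4)))
    (h0 : x 0 = y 0) (h0' : x' 0 = y 0) :
    ∀ t : ℝ, 0 < t →
      |Psi (fun s => concat x y (s + t)) - Psi (fun s => concat x' y (s + t))| ≤
        Real.exp (-t) *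
          ∫ s in Set.Iic (0:ℝ), Real.exp (-|s|) * (4 * n ^ 2 * (1 + |s| ^ ((3:ℝ)/4)) ^ 2) := by
  intro t ht
  -- continuity of the concatenations
  -- bound on y on [0, t]
  obtain ⟨M, hM⟩ := (isCompact_Icc (a := (0:ℝ)) (b := t)).exists_bound_of_continuousOn
    hyc.continuousOn
  have hM0 : 0 ≤ M := le_trans (norm_nonneg _) (hM 0 ⟨le_refl _, ht.le⟩)
  -- pointwise bound on the concatenations for s ≤ 0
  have hbound : ∀ (z : ℝ → ℝ), (∀ s : ℝ, s ≤ 0 → |z s| ≤ n * (1 + |s| ^ ((3:ℝ)/4))) →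
      ∀ s : ℝ, s ≤ 0 → |concat z y (s + t)| ≤ n * (1 + |s| ^ ((3:ℝ)/4)) + M := by
    intro z hzb s hs
    by_cases hst : s + t < 0
    · have h1 : |z (s + t)| ≤ n * (1 + |s + t| ^ ((3:ℝ)/4)) := hzb _ hst.le
      have h2 : |s + t| ≤ |s| := by
        rw [abs_of_nonpos hst.le, abs_of_nonpos hs]; linarith
      have h3 : |s + t| ^ ((3:ℝ)/4) ≤ |s| ^ ((3:ℝ)/4) :=
        Real.rpow_le_rpow (abs_nonneg _) h2 (by norm_num)
      simp only [concat, if_pos hst]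
      nlinarith
    · push_neg at hst
      have h1 : s + t ∈ Set.Icc (0:ℝ) t := ⟨hst, by linarith⟩
      have h2 : |y (s + t)| ≤ M := hM _ h1
      have h3 : 0 ≤ n * (1 + |s| ^ ((3:ℝ)/4)) := by
        have := Real.rpow_nonneg (abs_nonneg s) ((3:ℝ)/4); positivity
      simp only [concat, if_neg (not_lt.2 hst)]
      linarith
  -- integrability of the two integrands
  have hint : ∀ (z : ℝ → ℝ), Continuous z →
      (∀ s : ℝ, s ≤ 0 → |z s| ≤ n * (1 + |s| ^ ((3:ℝ)/4))) → z 0 = y 0 →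
      IntegrableOn (fun s => Real.exp (-s ^ 2 + s) * (concat z y (s + t)) ^ 2)
        (Set.Iic (0:ℝ)) := by
    intro z hzc hzb
    intro hz0
    have hcz : Continuous (concat z y) := concat_continuous hzc hyc hz0
    apply integrableOn_of_exp_bound
    · exact (Real.continuous_exp.comp (by continuity)).mul
        ((hcz.comp (by continuity)).pow 2)
    · intro s hs
      have hb := hbound z hzb s hs
      have hpoly : (1 + |s| ^ ((3:ℝ)/4))^2 ≤ 64 * Real.exp (-s/2) := by
        have := aux_poly (-s) (by linarith)
        rwa [abs_of_nonpos hs]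
      have hrn : 0 ≤ |s| ^ ((3:ℝ)/4) := Real.rpow_nonneg (abs_nonneg _) _
      have hsq : (concat z y (s + t))^2 ≤ (n * (1 + |s| ^ ((3:ℝ)/4)) + M)^2 := by
        have h1 : 0 ≤ n * (1 + |s| ^ ((3:ℝ)/4)) + M := by positivity
        nlinarith [abs_nonneg (concat z y (s + t)), sq_abs (concat z y (s + t))]
      have hsq2 : (n * (1 + |s| ^ ((3:ℝ)/4)) + M)^2 ≤
          2 * n^2 * (1 + |s| ^ ((3:ℝ)/4))^2 + 2 * M^2 := by
        nlinarith [sq_nonneg (n * (1 + |s| ^ ((3:ℝ)/4)) - M)]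
      have hexp1 : Real.exp (-s ^ 2 + s) ≤ Real.exp s :=
        Real.exp_le_exp.2 (by nlinarith)
      have hexpprod : Real.exp s * Real.exp (-s/2) = Real.exp (s/2) := by
        rw [← Real.exp_add]; ring_nf
      have hexp2 : Real.exp s ≤ Real.exp (s/2) := Real.exp_le_exp.2 (by linarith)
      rw [abs_of_nonneg (by positivity)]
      calc Real.exp (-s ^ 2 + s) * (concat z y (s + t)) ^ 2
          ≤ Real.exp s * (2 * n^2 * (1 + |s| ^ ((3:ℝ)/4))^2 + 2 * M^2) := by
            have := (Real.exp_pos (-s^2+s)).le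
            apply mul_le_mul hexp1 (hsq.trans hsq2) (sq_nonneg _) (Real.exp_pos s).le
        _ ≤ Real.exp s * (2 * n^2 * (64 * Real.exp (-s/2)) + 2 * M^2) := by
            have hinner : 2 * n^2 * (1 + |s| ^ ((3:ℝ)/4))^2 ≤
                2 * n^2 * (64 * Real.exp (-s/2)) :=
              mul_le_mul_of_nonneg_left hpoly (by positivity)
            exact mul_le_mul_of_nonneg_left (by linarith) (Real.exp_pos s).le
        _ = 128 * n^2 * (Real.exp s * Real.exp (-s/2)) + 2 * M^2 * Real.exp s := by ring
        _ ≤ 128 * n^2 * Real.exp (s/2) + 2 * M^2 * Real.exp (s/2) := by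
            rw [hexpprod]
            have h1 : 2 * M^2 * Real.exp s ≤ 2 * M^2 * Real.exp (s/2) :=
              mul_le_mul_of_nonneg_left hexp2 (by positivity)
            have h2 : 128 * n^2 * Real.exp (s/2) ≤ 128 * n^2 * Real.exp (s/2) := le_rfl
            linarith
        _ = (128 * n^2 + 2 * M^2) * Real.exp (s/2) := by ring
  have hF := hint x hxc hxb h0
  have hG := hint x' hx'c hx'b h0'
  -- the dominating function is integrable
  have hD' : IntegrableOn
      (fun s => Real.exp (-|s|) * (4 * n ^ 2 * (1 + |s| ^ ((3:ℝ)/4)) ^ 2))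
      (Set.Iic (0:ℝ)) := by
    apply integrableOn_of_exp_bound
    · have : Continuous fun s : ℝ => |s| ^ ((3:ℝ)/4) :=
        continuous_abs.rpow_const (fun s => Or.inr (by norm_num))
      fun_prop
    · intro s hs
      have hpoly : (1 + |s| ^ ((3:ℝ)/4))^2 ≤ 64 * Real.exp (-s/2) := by
        have := aux_poly (-s) (by linarith)
        rwa [abs_of_nonpos hs]
      have habs : Real.exp (-|s|) = Real.exp s := by rw [abs_of_nonpos hs, neg_neg]
      have hexpprod : Real.exp s * Real.exp (-s/2) = Real.exp (s/2) := by
        rw [← Real.exp_add]; ring_nf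
      have het : Real.exp (-t) ≤ 1 := Real.exp_le_one_iff.2 (by linarith)
      have hrn : 0 ≤ |s| ^ ((3:ℝ)/4) := Real.rpow_nonneg (abs_nonneg _) _
      rw [abs_of_nonneg (by positivity)]
      calc Real.exp (-|s|) * (4 * n ^ 2 * (1 + |s| ^ ((3:ℝ)/4)) ^ 2)
          = Real.exp s * (4 * n ^ 2 * (1 + |s| ^ ((3:ℝ)/4)) ^ 2) := by rw [habs]
        _ ≤ Real.exp s * (4 * n ^ 2 * (64 * Real.exp (-s/2))) := by
            refine mul_le_mul_of_nonneg_left ?_ (Real.exp_pos s).le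
            exact mul_le_mul_of_nonneg_left hpoly (by positivity)
        _ = 256 * n^2 * (Real.exp s * Real.exp (-s/2)) := by ring
        _ = 256 * n^2 * Real.exp (s/2) := by rw [hexpprod]
  have hD : IntegrableOn
      (fun s => Real.exp (-t) * (Real.exp (-|s|) * (4 * n ^ 2 * (1 + |s| ^ ((3:ℝ)/4)) ^ 2)))
      (Set.Iic (0:ℝ)) := hD'.const_mul _
  -- key pointwise estimate
  have hkey : ∀ s : ℝ, s ∈ Set.Iic (0:ℝ) →
      |Real.exp (-s ^ 2 + s) * (concat x y (s + t)) ^ 2 -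
        Real.exp (-s ^ 2 + s) * (concat x' y (s + t)) ^ 2| ≤
      Real.exp (-t) * (Real.exp (-|s|) * (4 * n ^ 2 * (1 + |s| ^ ((3:ℝ)/4)) ^ 2)) := by
    intro s hs
    simp only [Set.mem_Iic] at hs
    by_cases hst : s + t < 0
    · -- both are the pasts: use the bounds
      have hx1 : |x (s + t)| ≤ n * (1 + |s + t| ^ ((3:ℝ)/4)) := hxb _ hst.le
      have hx2 : |x' (s + t)| ≤ n * (1 + |s + t| ^ ((3:ℝ)/4)) := hx'b _ hst.le
      have h2 : |s + t| ≤ |s| := by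
        rw [abs_of_nonpos hst.le, abs_of_nonpos hs]; linarith
      have h3 : |s + t| ^ ((3:ℝ)/4) ≤ |s| ^ ((3:ℝ)/4) :=
        Real.rpow_le_rpow (abs_nonneg _) h2 (by norm_num)
      have hrn1 : 0 ≤ |s + t| ^ ((3:ℝ)/4) := Real.rpow_nonneg (abs_nonneg _) _
      have hrn : 0 ≤ |s| ^ ((3:ℝ)/4) := Real.rpow_nonneg (abs_nonneg _) _
      simp only [concat, if_pos hst]
      rw [← mul_sub, abs_mul, abs_of_nonneg (Real.exp_pos _).le]
      have hb : |x (s+t) ^ 2 - x' (s+t) ^ 2| ≤ 2 * n^2 * (1 + |s| ^ ((3:ℝ)/4))^2 := by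
        have hmono : n * (1 + |s + t| ^ ((3:ℝ)/4)) ≤ n * (1 + |s| ^ ((3:ℝ)/4)) :=
          mul_le_mul_of_nonneg_left (by linarith) hn.le
        have hle : |x (s+t)| ≤ n * (1 + |s| ^ ((3:ℝ)/4)) := hx1.trans hmono
        have hle' : |x' (s+t)| ≤ n * (1 + |s| ^ ((3:ℝ)/4)) := hx2.trans hmono
        have hxa : x (s+t)^2 ≤ (n * (1 + |s| ^ ((3:ℝ)/4)))^2 := by
          rw [← sq_abs]; exact pow_le_pow_left₀ (abs_nonneg _) hle 2
        have hxa' : x' (s+t)^2 ≤ (n * (1 + |s| ^ ((3:ℝ)/4)))^2 := by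
          rw [← sq_abs]; exact pow_le_pow_left₀ (abs_nonneg _) hle' 2
        rw [abs_sub_le_iff]
        constructor <;> nlinarith [sq_nonneg (x (s+t)), sq_nonneg (x' (s+t))]
      -- Gaussian weight estimate: e^{-s²+s} ≤ 2 e^{-t} e^{s}
      have hws : s < -t := by linarith
      have hsq : t ≤ s^2 + Real.log 2 := by
        have hlog : (0.6931471803:ℝ) < Real.log 2 := Real.log_two_gt_d9
        have hss : t ^ 2 ≤ s ^ 2 := by
          nlinarith [mul_pos (show (0:ℝ) < -(s + t) by linarith)
            (show (0:ℝ) < t - s by linarith)]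
        have hq : t - t^2 ≤ 1/4 := by nlinarith [sq_nonneg (t - 1/2)]
        linarith
      have hw : Real.exp (-s ^ 2 + s) ≤ 2 * (Real.exp (-t) * Real.exp s) := by
        rw [← Real.exp_add]
        calc Real.exp (-s ^ 2 + s) ≤ Real.exp (Real.log 2 + (-t + s)) :=
              Real.exp_le_exp.2 (by linarith)
          _ = 2 * Real.exp (-t + s) := by
              rw [Real.exp_add, Real.exp_log (by norm_num : (0:ℝ) < 2)]
      have habs : Real.exp (-|s|) = Real.exp s := by rw [abs_of_nonpos hs, neg_neg]
      rw [habs]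
      calc Real.exp (-s ^ 2 + s) * |x (s+t) ^ 2 - x' (s+t) ^ 2|
          ≤ (2 * (Real.exp (-t) * Real.exp s)) * (2 * n^2 * (1 + |s| ^ ((3:ℝ)/4))^2) := by
            apply mul_le_mul hw hb (abs_nonneg _) (by positivity)
        _ = Real.exp (-t) * (Real.exp s * (4 * n ^ 2 * (1 + |s| ^ ((3:ℝ)/4)) ^ 2)) := by ring
    · -- both are the future: difference is zero
      push_neg at hst
      have h1 : ¬ (s + t < 0) := not_lt.2 hst
      simp only [concat, if_neg h1]
      have hrn : 0 ≤ |s| ^ ((3:ℝ)/4) := Real.rpow_nonneg (abs_nonneg _) _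
      rw [sub_self, abs_zero]
      positivity
  -- assemble
  have hsub : Psi (fun s => concat x y (s + t)) - Psi (fun s => concat x' y (s + t)) =
      ∫ s in Set.Iic (0:ℝ),
        (Real.exp (-s ^ 2 + s) * (concat x y (s + t)) ^ 2 -
         Real.exp (-s ^ 2 + s) * (concat x' y (s + t)) ^ 2) := by
    unfold Psi
    rw [integral_sub hF hG]
  rw [hsub]
  have h1 : |∫ s in Set.Iic (0:ℝ),
        (Real.exp (-s ^ 2 + s) * (concat x y (s + t)) ^ 2 -
         Real.exp (-s ^ 2 + s) * (concat x' y (s + t)) ^ 2)| ≤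
      ∫ s in Set.Iic (0:ℝ),
        |Real.exp (-s ^ 2 + s) * (concat x y (s + t)) ^ 2 -
         Real.exp (-s ^ 2 + s) * (concat x' y (s + t)) ^ 2| := by
    simpa [Real.norm_eq_abs] using
      norm_integral_le_integral_norm (μ := volume.restrict (Set.Iic (0:ℝ)))
        (fun s => Real.exp (-s ^ 2 + s) * (concat x y (s + t)) ^ 2 -
          Real.exp (-s ^ 2 + s) * (concat x' y (s + t)) ^ 2)
  refine h1.trans ?_
  have h2 : ∫ s in Set.Iic (0:ℝ),
        |Real.exp (-s ^ 2 + s) * (concat x y (s + t)) ^ 2 -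
         Real.exp (-s ^ 2 + s) * (concat x' y (s + t)) ^ 2| ≤
      ∫ s in Set.Iic (0:ℝ),
        Real.exp (-t) * (Real.exp (-|s|) * (4 * n ^ 2 * (1 + |s| ^ ((3:ℝ)/4)) ^ 2)) :=
    setIntegral_mono_on (hF.sub hG).abs hD measurableSet_Iic hkey
  refine h2.trans ?_
  rw [integral_const_mul]
end
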